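/- arXiv:math/0703758 — 7 statements merged into one kernel-verified Lean document; each statement's English description precedes it below -/
import Mathlib

section
/- Let X be a finite set with a partial order ⪯ and let A, B ⊆ X. For S ⊆ X write cone(S) = {y ∈ X : y ⪯ x for some x ∈ S}. The following are equivalent: (1) there exists an injection ψ : A → B with ψ(x) ⪯ x for all x ∈ A; (2) for every S ⊆ X, |cone(S) ∩ A| ≤ |cone(S) ∩ B|; (3) for every S ⊆ A, |cone(S) ∩ A| ≤ |cone(S) ∩ B|. -/
/-- The lower set generated by `S` in `X`. -/
def coneSet {X : Type*} [PartialOrder X] (S : Set X) : Set X :=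
  {y | ∃ x ∈ S, y ≤ x}

/-- For finite `X` with a partial order and `A, B ⊆ X`, the following are
equivalent: (1) there is a weakly decreasing injection `A → B`;
(2) `|cone(S) ∩ A| ≤ |cone(S) ∩ B|` for all `S ⊆ X`;
(3) the same for all `S ⊆ A`. -/
theorem stmt_1 (X : Type*) [Fintype X] [PartialOrder X] (A B : Set X) :
    ((∃ ψ : A → B, Function.Injective ψ ∧ ∀ a : A, (ψ a : X) ≤ (a : X)) ↔
      ∀ S : Set X, (coneSet S ∩ A).ncard ≤ (coneSet S ∩ B).ncard)
    ∧
    ((∀ S : Set X, (coneSet S ∩ A).ncard ≤ (coneSet S ∩ B).ncard) ↔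
      ∀ S ⊆ A, (coneSet S ∩ A).ncard ≤ (coneSet S ∩ B).ncard) := by
  classical
  -- (1) → (2)
  have h12 : (∃ ψ : A → B, Function.Injective ψ ∧ ∀ a : A, (ψ a : X) ≤ (a : X)) →
      ∀ S : Set X, (coneSet S ∩ A).ncard ≤ (coneSet S ∩ B).ncard := by
    rintro ⟨ψ, hinj, hle⟩ S
    set f : X → X := fun x => if h : x ∈ A then (ψ ⟨x, h⟩ : X) else x with hf
    apply Set.ncard_le_ncard_of_injOn f
    · rintro x ⟨⟨s, hs, hxs⟩, hxA⟩
      simp only [hf, dif_pos hxA]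
      exact ⟨⟨s, hs, le_trans (hle ⟨x, hxA⟩) hxs⟩, (ψ ⟨x, hxA⟩).2⟩
    · rintro x ⟨-, hxA⟩ y ⟨-, hyA⟩ hxy
      simp only [hf, dif_pos hxA, dif_pos hyA] at hxy
      exact congrArg Subtype.val (hinj (Subtype.ext hxy))
  -- (3) → (1)
  have h31 : (∀ S ⊆ A, (coneSet S ∩ A).ncard ≤ (coneSet S ∩ B).ncard) →
      ∃ ψ : A → B, Function.Injective ψ ∧ ∀ a : A, (ψ a : X) ≤ (a : X) := by
    intro h
    haveI : Fintype A := (Set.toFinite A).fintype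
    set t : A → Finset X := fun a => (B ∩ {b | b ≤ (a : X)}).toFinset with ht
    have hall : ∀ s : Finset A, s.card ≤ (s.biUnion t).card := by
      intro s
      set S : Set X := (↑(s.image (Subtype.val)) : Set X) with hS
      have hSA : S ⊆ A := by
        intro x hx
        simp only [hS, Finset.coe_image, Set.mem_image, Finset.mem_coe] at hx
        obtain ⟨a, -, rfl⟩ := hx
        exact a.2
      have h1 : s.card ≤ (coneSet S ∩ A).ncard := by
        rw [Set.ncard_eq_toFinset_card']
        have : s.image Subtype.val ⊆ (coneSet S ∩ A).toFinset := by
          intro x hx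
          obtain ⟨a, ha, rfl⟩ := Finset.mem_image.mp hx
          simp only [Set.mem_toFinset]
          exact ⟨⟨a, by simp only [hS, Finset.mem_coe]; exact Finset.mem_coe.mpr (Finset.mem_image_of_mem _ ha), le_refl _⟩, a.2⟩
        calc s.card = (s.image Subtype.val).card :=
              (Finset.card_image_of_injective _ Subtype.val_injective).symm
          _ ≤ _ := Finset.card_le_card this
      have h2 : (coneSet S ∩ B).ncard = (s.biUnion t).card := by
        rw [← Set.ncard_coe_finset]
        congr 1
        ext b
        constructor
        · rintro ⟨⟨x, hx, hbx⟩, hbB⟩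
          rw [hS] at hx
          obtain ⟨a, ha, rfl⟩ := Finset.mem_image.mp (Finset.mem_coe.mp hx)
          exact Finset.mem_coe.mpr (Finset.mem_biUnion.mpr
            ⟨a, ha, by rw [ht]; exact Set.mem_toFinset.mpr ⟨hbB, hbx⟩⟩)
        · intro hb
          obtain ⟨a, ha, hba⟩ := Finset.mem_biUnion.mp (Finset.mem_coe.mp hb)
          rw [ht, Set.mem_toFinset] at hba
          exact ⟨⟨a, by
            rw [hS]; exact Finset.mem_coe.mpr (Finset.mem_image_of_mem _ ha), hba.2⟩, hba.1⟩
      exact h1.trans ((h S hSA).trans_eq h2)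
    obtain ⟨f, hfinj, hfm⟩ := (Finset.all_card_le_biUnion_card_iff_exists_injective t).mp hall
    have hfm' : ∀ a : A, f a ∈ B ∧ f a ≤ (a : X) := by
      intro a
      have := hfm a
      rw [ht, Set.mem_toFinset] at this
      exact this
    refine ⟨fun a => ⟨f a, (hfm' a).1⟩, ?_, fun a => (hfm' a).2⟩
    intro x y hxy
    exact hfinj (congrArg Subtype.val hxy)
  refine ⟨⟨fun h S => h12 h S, fun h => h31 (fun S _ => h S)⟩,
    ⟨fun h S _ => h S, fun h => h12 (h31 h)⟩⟩
end

section
/- Let A and B be finite subsets of ℤ². Order ℤ² componentwise: (a,b) ⩽̇ (x,y) iff a ≤ x and b ≤ y, and (a,b) <̇ (x,y) iff a < x and b < y. If there exists an injection φ : A → B with φ(α) <̇ α for all α ∈ A, then for every Γ ⊆ ℤ², |cone(Γ) ∩ A| ≤ |cone(Γ−(1,1)) ∩ B|. Conversely, if |cone(Γ) ∩ A| ≤ |cone(Γ−(1,1)) ∩ B| for every Γ ⊆ A, then there exists a strictly decreasing injection from A to B. -/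
/-- The lower set (cone) of `Γ ⊆ ℤ²` with respect to the componentwise order. -/
def coneZ2 (Γ : Set (ℤ × ℤ)) : Set (ℤ × ℤ) :=
  {β | ∃ α ∈ Γ, β.1 ≤ α.1 ∧ β.2 ≤ α.2}

/-- If there is a strictly decreasing injection `A → B` (finite subsets of `ℤ²`),
then `|cone(Γ) ∩ A| ≤ |cone(Γ−(1,1)) ∩ B|` for every `Γ ⊆ ℤ²`; conversely, if the
inequality holds for every `Γ ⊆ A`, then there is a strictly decreasing
injection from `A` to `B`. -/
theorem stmt_2 (A B : Set (ℤ × ℤ)) (hA : A.Finite) (hB : B.Finite) :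
    ((∃ φ : A → B, Function.Injective φ ∧
        ∀ a : A, ((φ a : ℤ × ℤ)).1 < (a : ℤ × ℤ).1 ∧ ((φ a : ℤ × ℤ)).2 < (a : ℤ × ℤ).2) →
      ∀ Γ : Set (ℤ × ℤ),
        (coneZ2 Γ ∩ A).ncard ≤ (coneZ2 ((fun γ => γ - (1, 1)) '' Γ) ∩ B).ncard)
    ∧
    ((∀ Γ ⊆ A,
        (coneZ2 Γ ∩ A).ncard ≤ (coneZ2 ((fun γ => γ - (1, 1)) '' Γ) ∩ B).ncard) →
      ∃ φ : A → B, Function.Injective φ ∧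
        ∀ a : A, ((φ a : ℤ × ℤ)).1 < (a : ℤ × ℤ).1 ∧ ((φ a : ℤ × ℤ)).2 < (a : ℤ × ℤ).2) := by
  classical
  constructor
  · rintro ⟨φ, hinj, hdec⟩ Γ
    set f : ℤ × ℤ → ℤ × ℤ := fun a => if h : a ∈ A then (φ ⟨a, h⟩ : ℤ × ℤ) else a with hf
    refine Set.ncard_le_ncard_of_injOn f ?_ ?_ (hB.inter_of_right _)
    · rintro a ⟨⟨γ, hγ, h1, h2⟩, haA⟩
      have hfa : f a = (φ ⟨a, haA⟩ : ℤ × ℤ) := by simp [hf, haA]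
      have hd1 : (φ ⟨a, haA⟩ : ℤ × ℤ).1 < a.1 := (hdec ⟨a, haA⟩).1
      have hd2 : (φ ⟨a, haA⟩ : ℤ × ℤ).2 < a.2 := (hdec ⟨a, haA⟩).2
      refine ⟨⟨γ - (1, 1), ⟨γ, hγ, rfl⟩, ?_, ?_⟩, ?_⟩
      · simp only [hfa, Prod.fst_sub]; omega
      · simp only [hfa, Prod.snd_sub]; omega
      · rw [hfa]; exact (φ ⟨a, haA⟩).2
    · rintro a ⟨-, haA⟩ b ⟨-, hbA⟩ hab
      have : φ ⟨a, haA⟩ = φ ⟨b, hbA⟩ := by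
        apply Subtype.ext
        simpa [hf, haA, hbA] using hab
      simpa using congrArg Subtype.val (hinj this)
  · intro h
    set t : A → Finset (ℤ × ℤ) := fun a =>
      hB.toFinset.filter (fun b => b.1 < (a : ℤ × ℤ).1 ∧ b.2 < (a : ℤ × ℤ).2) with ht
    have hall : ∀ s : Finset A, s.card ≤ (s.biUnion t).card := by
      intro s
      set Γ : Set (ℤ × ℤ) := ↑(s.image Subtype.val) with hΓ
      have hΓA : Γ ⊆ A := by
        intro x hx
        simp only [hΓ, Finset.coe_image, Set.mem_image, Finset.mem_coe] at hx
        obtain ⟨a, -, rfl⟩ := hx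
        exact a.2
      have h1 : s.card = Γ.ncard := by
        rw [hΓ, Set.ncard_coe_finset, Finset.card_image_of_injective _ Subtype.val_injective]
      have h2 : Γ.ncard ≤ (coneZ2 Γ ∩ A).ncard := by
        apply Set.ncard_le_ncard _ (hA.inter_of_right _)
        intro x hx
        exact ⟨⟨x, hx, le_refl _, le_refl _⟩, hΓA hx⟩
      have h3 := h Γ hΓA
      have h4 : (coneZ2 ((fun γ => γ - (1, 1)) '' Γ) ∩ B) ⊆ ↑(s.biUnion t) := by
        rintro b ⟨⟨δ, ⟨γ, hγ, rfl⟩, hb1, hb2⟩, hbB⟩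
        simp only [hΓ, Finset.coe_image, Set.mem_image, Finset.mem_coe] at hγ
        obtain ⟨a, has, rfl⟩ := hγ
        simp only [Finset.coe_biUnion, Set.mem_iUnion, Finset.mem_coe]
        refine ⟨a, has, ?_⟩
        simp only [ht, Finset.mem_filter, Set.Finite.mem_toFinset]
        refine ⟨hbB, ?_, ?_⟩ <;> simp only [Prod.fst_sub, Prod.snd_sub] at hb1 hb2 <;> omega
      have h5 : (coneZ2 ((fun γ => γ - (1, 1)) '' Γ) ∩ B).ncard ≤ (s.biUnion t).card := by
        rw [← Set.ncard_coe_finset]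
        exact Set.ncard_le_ncard h4 (s.biUnion t).finite_toSet
      omega
    obtain ⟨f, hfinj, hf⟩ := (Finset.all_card_le_biUnion_card_iff_exists_injective t).mp hall
    have hfB : ∀ a, f a ∈ B ∧ (f a).1 < (a : ℤ × ℤ).1 ∧ (f a).2 < (a : ℤ × ℤ).2 := by
      intro a
      have := hf a
      simp only [ht, Finset.mem_filter, Set.Finite.mem_toFinset] at this
      exact ⟨this.1, this.2⟩
    refine ⟨fun a => ⟨f a, (hfB a).1⟩, ?_, fun a => (hfB a).2⟩
    intro a b hab
    exact hfinj (congrArg Subtype.val hab)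
end

section
/- Let R = [a..b] × [c..d] be a nonempty rectangle in ℤ² and X ⊆ R. Put R₀ = [a..b] × {c}, R₁ = [a..b] × (c..d], and Y = X ∩ R₁. The following are equivalent: (1) there exists an injection ψ : Y → X with ψ(y) <̇ y for all y ∈ Y; (2) for every subset Δ of Y whose points are pairwise incomparable with respect to <̇, there exists a strictly decreasing injection from Δ to X ∩ R₀. -/
/-!
Both directions are instances of Hall's marriage theorem for the relation "lies strictly below".

If `ψ : Y → X` is a strictly decreasing injection and `u ⊆ Y` is a finite antichain, let `D` be the
set of points of `X` strictly below some point of `u`. Then `ψ` maps `u ∪ (D ∩ Y)` injectively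
into `D`, and `u` is disjoint from `D`, so `|u| ≤ |D \ Y|`: this is Hall's condition for matching
the antichain into `X \ Y`.

Conversely, for a finite `u ⊆ Y`, match the maximal elements of `u` (an antichain) into `X \ Y`
and send every other point of `u` to itself; this gives Hall's condition for `ψ`.
-/

open Set
open scoped Finset

variable {α : Type*} {r : α → α → Prop}

def DecreasingInjOn (r : α → α → Prop) (f : α → α) (s t : Set α) : Prop :=
  MapsTo f s t ∧ InjOn f s ∧ ∀ x ∈ s, r (f x) x

theorem exists_decreasingInjOn_of_forall_card_le {s t : Set α} (ht : t.Finite)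
    (hall : ∀ u : Finset α, ↑u ⊆ s → #u ≤ {x ∈ t | ∃ y ∈ u, r x y}.ncard) :
    ∃ f, DecreasingInjOn r f s t := by
  classical
  let T : s → Finset α := fun y => {x ∈ ht.toFinset | r x y}
  obtain ⟨g, hg_inj, hgT⟩ := (Finset.all_card_le_biUnion_card_iff_exists_injective T).mp
    fun u => by
      have hsub : (u.map (Function.Embedding.subtype _) : Set α) ⊆ s := fun x hx => by
        obtain ⟨y, -, rfl⟩ := Finset.mem_map.mp hx
        exact y.2
      convert hall _ hsub using 1
      · exact (Finset.card_map _).symm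
      · rw [← Set.ncard_coe_finset]
        congr 1
        ext x
        simp [T]
  have hg : ∀ y : s, g y ∈ t ∧ r (g y) y := fun y => by simpa [T] using hgT y
  refine ⟨fun x => if h : x ∈ s then g ⟨x, h⟩ else x, fun x hx => ?_, fun x hx y hy hxy => ?_,
    fun x hx => ?_⟩
  · simpa only [dif_pos hx] using (hg ⟨x, hx⟩).1
  · simp only [dif_pos hx, dif_pos hy] at hxy
    exact congrArg Subtype.val (hg_inj hxy)
  · simpa only [dif_pos hx] using (hg ⟨x, hx⟩).2

theorem card_le_ncard_of_decreasingInjOn [IsTrans α r] {ψ : α → α} {X Y : Set α}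
    (hX : X.Finite) (hψ : DecreasingInjOn r ψ Y X) {u : Finset α} (huY : ↑u ⊆ Y)
    (hu : ∀ x ∈ u, ∀ y ∈ u, ¬ r x y) :
    #u ≤ {x ∈ X \ Y | ∃ y ∈ u, r x y}.ncard := by
  obtain ⟨hmaps, hinj, hdec⟩ := hψ
  set D : Set α := {x ∈ X | ∃ y ∈ u, r x y}
  have hDfin : D.Finite := hX.sep _
  have hmapsD : MapsTo ψ (↑u ∪ D ∩ Y) D := by
    rintro x (hx | ⟨⟨-, y, hy, hxy⟩, hxY⟩)
    · exact ⟨hmaps (huY hx), x, hx, hdec x (huY hx)⟩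
    · exact ⟨hmaps hxY, y, hy, _root_.trans (hdec x hxY) hxy⟩
  have hdisj : Disjoint (↑u : Set α) (D ∩ Y) :=
    Set.disjoint_left.mpr fun x hx ⟨⟨_, y, hy, hxy⟩, _⟩ => hu x hx y hy hxy
  have hDY : D \ Y = {x ∈ X \ Y | ∃ y ∈ u, r x y} := by
    ext x
    simp only [D, mem_sdiff, mem_ofPred_eq]
    tauto
  have := Set.ncard_le_ncard_of_injOn ψ hmapsD
    (hinj.mono (union_subset huY inter_subset_right)) hDfin
  rw [ncard_union_eq hdisj (Finset.finite_toSet u) (hDfin.inter_of_left Y), ncard_coe_finset,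
    ← ncard_inter_add_ncard_sdiff_eq_ncard D Y hDfin] at this
  rw [← hDY]
  omega

theorem card_le_ncard_of_forall_antichain {X Y : Set α} (hX : X.Finite) (hYX : Y ⊆ X)
    (h : ∀ Δ ⊆ Y, (∀ x ∈ Δ, ∀ y ∈ Δ, ¬ r x y) → ∃ φ, DecreasingInjOn r φ Δ (X \ Y))
    {u : Finset α} (huY : ↑u ⊆ Y) :
    #u ≤ {x ∈ X | ∃ y ∈ u, r x y}.ncard := by
  classical
  set M : Set α := {y ∈ (u : Set α) | ∀ z ∈ u, ¬ r y z}
  obtain ⟨φ, hφmaps, hφinj, hφdec⟩ :=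
    h M (fun y hy => huY hy.1) fun y hy z hz => hy.2 z hz.1
  rw [← ncard_coe_finset]
  refine Set.ncard_le_ncard_of_injOn (M.piecewise φ id) (fun y hy => ?_) (fun y hy z hz hyz => ?_)
    (hX.sep _)
  · by_cases hyM : y ∈ M
    · rw [piecewise_eq_of_mem _ _ _ hyM]
      exact ⟨(hφmaps hyM).1, y, hy, hφdec y hyM⟩
    · rw [piecewise_eq_of_notMem _ _ _ hyM]
      obtain ⟨z, hz, hyz⟩ : ∃ z ∈ u, r y z := by simpa [M, Finset.mem_coe.mp hy] using hyM
      exact ⟨hYX (huY hy), z, hz, hyz⟩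
  · -- `φ` lands outside `Y`, while `id` stays in `Y`
    by_cases hyM : y ∈ M <;> by_cases hzM : z ∈ M
    · rw [piecewise_eq_of_mem _ _ _ hyM, piecewise_eq_of_mem _ _ _ hzM] at hyz
      exact hφinj hyM hzM hyz
    · rw [piecewise_eq_of_mem _ _ _ hyM, piecewise_eq_of_notMem _ _ _ hzM] at hyz
      exact absurd (hyz ▸ huY hz) (hφmaps hyM).2
    · rw [piecewise_eq_of_notMem _ _ _ hyM, piecewise_eq_of_mem _ _ _ hzM] at hyz
      exact absurd (hyz ▸ huY hy) (hφmaps hzM).2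
    · rwa [piecewise_eq_of_notMem _ _ _ hyM, piecewise_eq_of_notMem _ _ _ hzM] at hyz

theorem exists_decreasingInjOn_iff_forall_antichain [IsTrans α r] {X Y : Set α} (hX : X.Finite)
    (hYX : Y ⊆ X) :
    (∃ ψ, DecreasingInjOn r ψ Y X) ↔
      ∀ Δ ⊆ Y, (∀ x ∈ Δ, ∀ y ∈ Δ, ¬ r x y) → ∃ φ, DecreasingInjOn r φ Δ (X \ Y) := by
  constructor
  · rintro ⟨ψ, hψ⟩ Δ hΔY hΔ
    exact exists_decreasingInjOn_of_forall_card_le hX.sdiff fun u hu =>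
      card_le_ncard_of_decreasingInjOn hX hψ (hu.trans hΔY) fun x hx y hy => hΔ x (hu hx) y (hu hy)
  · intro h
    exact exists_decreasingInjOn_of_forall_card_le hX fun u hu =>
      card_le_ncard_of_forall_antichain hX hYX h hu

theorem stmt_6_general (a b c d : ℤ)
    (X : Set (ℤ × ℤ))
    (hX : X ⊆ {p : ℤ × ℤ | a ≤ p.1 ∧ p.1 ≤ b ∧ c ≤ p.2 ∧ p.2 ≤ d}) :
    (∃ ψ : ℤ × ℤ → ℤ × ℤ,
        Set.MapsTo ψ (X ∩ {p | c < p.2}) X ∧ Set.InjOn ψ (X ∩ {p | c < p.2}) ∧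
        ∀ y ∈ X ∩ {p | c < p.2}, (ψ y).1 < y.1 ∧ (ψ y).2 < y.2) ↔
    (∀ Δ ⊆ X ∩ {p | c < p.2},
        (∀ x ∈ Δ, ∀ y ∈ Δ, ¬(x.1 < y.1 ∧ x.2 < y.2)) →
        ∃ φ : ℤ × ℤ → ℤ × ℤ,
          Set.MapsTo φ Δ (X ∩ {p | p.2 = c}) ∧ Set.InjOn φ Δ ∧
          ∀ x ∈ Δ, (φ x).1 < x.1 ∧ (φ x).2 < x.2) := by
  have hfin : X.Finite := (Set.finite_Icc (a, c) (b, d)).subset fun p hp =>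
    ⟨⟨(hX hp).1, (hX hp).2.2.1⟩, (hX hp).2.1, (hX hp).2.2.2⟩
  have hbottom : X ∩ {p | p.2 = c} = X \ (X ∩ {p | c < p.2}) := by
    ext p
    by_cases hp : p ∈ X
    · have := (hX hp).2.2.1
      simp only [mem_inter_iff, mem_sdiff, mem_ofPred_eq, hp, true_and, not_lt]
      omega
    · simp [hp]
  have : IsTrans (ℤ × ℤ) fun p q => p.1 < q.1 ∧ p.2 < q.2 :=
    ⟨fun _ _ _ h h' => ⟨h.1.trans h'.1, h.2.trans h'.2⟩⟩
  rw [hbottom]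
  exact exists_decreasingInjOn_iff_forall_antichain (r := fun p q => p.1 < q.1 ∧ p.2 < q.2)
    hfin inter_subset_left

/-- Lemma about rectangles: let `R = [a..b] × [c..d]` be a nonempty rectangle,
`X ⊆ R`, `R₀ = [a..b] × {c}`, `R₁ = [a..b] × (c..d]` and `Y = X ∩ R₁`. Then
there exists a strictly decreasing injection `Y → X` if and only if for every
subset `Δ` of `Y` with pairwise incomparable points (componentwise strict
order) there exists a strictly decreasing injection `Δ → X ∩ R₀`. -/
theorem stmt_6 (a b c d : ℤ) (hab : a ≤ b) (hcd : c ≤ d)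
    (X : Set (ℤ × ℤ))
    (hX : X ⊆ {p : ℤ × ℤ | a ≤ p.1 ∧ p.1 ≤ b ∧ c ≤ p.2 ∧ p.2 ≤ d}) :
    (∃ ψ : ℤ × ℤ → ℤ × ℤ,
        Set.MapsTo ψ (X ∩ {p | c < p.2}) X ∧ Set.InjOn ψ (X ∩ {p | c < p.2}) ∧
        ∀ y ∈ X ∩ {p | c < p.2}, (ψ y).1 < y.1 ∧ (ψ y).2 < y.2) ↔
    (∀ Δ ⊆ X ∩ {p | c < p.2},
        (∀ x ∈ Δ, ∀ y ∈ Δ, ¬(x.1 < y.1 ∧ x.2 < y.2)) →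
        ∃ φ : ℤ × ℤ → ℤ × ℤ,
          Set.MapsTo φ Δ (X ∩ {p | p.2 = c}) ∧ Set.InjOn φ Δ ∧
          ∀ x ∈ Δ, (φ x).1 < x.1 ∧ (φ x).2 < x.2) :=
  stmt_6_general a b c d X hX
end

section
/- Let S = ⋃_{s=a}^{b} ({s} × [f_s..l_s]) be a nonempty 'snake-shaped' subset of ℤ², where a ≤ b, f_{s+1} ≤ f_s ≤ l_{s+1} ≤ l_s for a ≤ s ≤ b−1, and f_s ≥ l_{s+2} for a ≤ s ≤ b−2. Let M ⊆ X ⊆ [a..b] × ℤ and let φ : M → X be an injection with x <̇ φ(x) for all x ∈ M (strictly increasing). Suppose X ∩ S contains no two points comparable under <̇. Then there is an injection φ_S : M → X \ S such that for every x ∈ M, either x <̇ φ_S(x), or φ_S(x) = x and x lies below S (i.e. writing x = (x₁,x₂), one has x₂ < f_{x₁}). -/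
/-!
Send `x ∈ M` to `φ x`, except when the chain `x, φ x, φ² x, …` runs through `M` into `S`; then
keep `x` fixed. Injectivity survives because a point that is kept fixed is never the image of a
point that moves: if `φ y = x` and the chain from `x` reaches `S`, so does the chain from `y`.
A fixed point `x` lies below `S`: its chain reaches some `p ∈ X ∩ S` with `x <̇ p`, and since `l`
is antitone, `x₂ < p₂ ≤ l_{p₁} ≤ l_{x₁}`; so `x₂ ≥ f_{x₁}` would put `x` in `X ∩ S`, comparable
with `p`.
-/

open Set Relation

section StopBefore

variable {α : Type*} (φ : α → α) (M : Set α)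

def StepOn (y z : α) : Prop := y ∈ M ∧ φ y = z

/-- `ReachesOn φ M T x`: some `φ^[k+1] x` lies in `T` while `x, …, φ^[k] x` all lie in `M`. -/
def ReachesOn (T : Set α) (x : α) : Prop := ∃ p ∈ T, TransGen (StepOn φ M) x p

open scoped Classical in
noncomputable def stopBefore (T : Set α) (x : α) : α := if ReachesOn φ M T x then x else φ x

variable {φ M}

theorem Relation.TransGen.stepOn_mem {X : Set α} (hφ : MapsTo φ M X) {x p : α}
    (h : TransGen (StepOn φ M) x p) : p ∈ X := by
  obtain ⟨y, -, hy, rfl⟩ := TransGen.tail'_iff.mp h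
  exact hφ hy

theorem Relation.TransGen.stepOn_rel {r : α → α → Prop} [IsTrans α r] (hφ : ∀ x ∈ M, r x (φ x))
    {x p : α} (h : TransGen (StepOn φ M) x p) : r x p := by
  induction h with
  | single hxy => obtain ⟨hx, rfl⟩ := hxy; exact hφ _ hx
  | tail _ hyz ih => obtain ⟨hy, rfl⟩ := hyz; exact _root_.trans_of r ih (hφ _ hy)

theorem ReachesOn.of_apply {T : Set α} {y : α} (hy : y ∈ M) (h : ReachesOn φ M T (φ y)) :
    ReachesOn φ M T y :=
  let ⟨p, hpT, hp⟩ := h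
  ⟨p, hpT, TransGen.head ⟨hy, rfl⟩ hp⟩

theorem apply_notMem_of_not_reachesOn {T : Set α} {x : α} (hx : x ∈ M)
    (h : ¬ReachesOn φ M T x) : φ x ∉ T :=
  fun hφx => h ⟨φ x, hφx, TransGen.single ⟨hx, rfl⟩⟩

theorem stopBefore_of_reachesOn {T : Set α} {x : α} (h : ReachesOn φ M T x) :
    stopBefore φ M T x = x :=
  if_pos h

theorem stopBefore_of_not_reachesOn {T : Set α} {x : α} (h : ¬ReachesOn φ M T x) :
    stopBefore φ M T x = φ x :=
  if_neg h

theorem injOn_stopBefore (hinj : InjOn φ M) (T : Set α) : InjOn (stopBefore φ M T) M := by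
  intro x hx y hy hxy
  by_cases hrx : ReachesOn φ M T x <;> by_cases hry : ReachesOn φ M T y <;>
    simp only [stopBefore_of_reachesOn, stopBefore_of_not_reachesOn, hrx, hry,
      not_false_eq_true] at hxy
  · exact hxy
  · exact absurd (ReachesOn.of_apply hy (hxy ▸ hrx)) hry
  · exact absurd (ReachesOn.of_apply hx (hxy ▸ hry)) hrx
  · exact hinj hx hy hxy

theorem mapsTo_stopBefore {X T : Set α} (hMX : M ⊆ X) (hφ : MapsTo φ M X)
    (hMT : ∀ x ∈ M, ReachesOn φ M T x → x ∉ T) : MapsTo (stopBefore φ M T) M (X \ T) := by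
  intro x hx
  by_cases hrx : ReachesOn φ M T x
  · rw [stopBefore_of_reachesOn hrx]
    exact ⟨hMX hx, hMT x hx hrx⟩
  · rw [stopBefore_of_not_reachesOn hrx]
    exact ⟨hφ hx, apply_notMem_of_not_reachesOn hx hrx⟩

end StopBefore

theorem antitoneOn_Icc_of_succ_le {a b : ℤ} {l : ℤ → ℤ}
    (h : ∀ s : ℤ, a ≤ s → s ≤ b - 1 → l (s + 1) ≤ l s) : AntitoneOn l (Icc a b) :=
  antitoneOn_of_add_one_le ordConnected_Icc fun s _ hs hs1 => h s hs.1 (by linarith [hs1.2])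

theorem snd_lt_of_lt_mem_snake {a b : ℤ} {f l : ℤ → ℤ} {S X : Set (ℤ × ℤ)}
    (hS : S = {p : ℤ × ℤ | a ≤ p.1 ∧ p.1 ≤ b ∧ f p.1 ≤ p.2 ∧ p.2 ≤ l p.1})
    (hl : AntitoneOn l (Icc a b))
    (hincomp : ∀ x ∈ X ∩ S, ∀ y ∈ X ∩ S, ¬(x.1 < y.1 ∧ x.2 < y.2))
    {x p : ℤ × ℤ} (hx : x ∈ X) (hxab : x.1 ∈ Icc a b) (hp : p ∈ X ∩ S)
    (hxp : x.1 < p.1 ∧ x.2 < p.2) : x.2 < f x.1 := by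
  subst hS
  by_contra! hfx
  have hlp : l p.1 ≤ l x.1 := hl hxab ⟨hp.2.1, hp.2.2.1⟩ hxp.1.le
  have hpl : p.2 ≤ l p.1 := hp.2.2.2.2
  exact hincomp x ⟨hx, hxab.1, hxab.2, hfx, by linarith⟩ p hp hxp

theorem stmt_7_general (a b : ℤ) (f l : ℤ → ℤ)
    (S : Set (ℤ × ℤ))
    (hS : S = {p : ℤ × ℤ | a ≤ p.1 ∧ p.1 ≤ b ∧ f p.1 ≤ p.2 ∧ p.2 ≤ l p.1})
    (hshape1 : ∀ s : ℤ, a ≤ s → s ≤ b - 1 →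
      f (s + 1) ≤ f s ∧ f s ≤ l (s + 1) ∧ l (s + 1) ≤ l s)
    (M X : Set (ℤ × ℤ)) (hMX : M ⊆ X)
    (hXstrip : X ⊆ {p : ℤ × ℤ | a ≤ p.1 ∧ p.1 ≤ b})
    (φ : ℤ × ℤ → ℤ × ℤ)
    (hφmaps : Set.MapsTo φ M X) (hφinj : Set.InjOn φ M)
    (hφinc : ∀ x ∈ M, x.1 < (φ x).1 ∧ x.2 < (φ x).2)
    (hincomp : ∀ x ∈ X ∩ S, ∀ y ∈ X ∩ S, ¬(x.1 < y.1 ∧ x.2 < y.2)) :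
    ∃ φS : ℤ × ℤ → ℤ × ℤ,
      Set.MapsTo φS M (X \ S) ∧ Set.InjOn φS M ∧
      ∀ x ∈ M, (x.1 < (φS x).1 ∧ x.2 < (φS x).2) ∨ (φS x = x ∧ x.2 < f x.1) := by
  have hl := antitoneOn_Icc_of_succ_le fun s hs hsb => (hshape1 s hs hsb).2.2
  let lt₂ (x y : ℤ × ℤ) : Prop := x.1 < y.1 ∧ x.2 < y.2
  have : IsTrans (ℤ × ℤ) lt₂ := ⟨fun _ _ _ h₁ h₂ => ⟨h₁.1.trans h₂.1, h₁.2.trans h₂.2⟩⟩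
  have hbelow : ∀ x ∈ M, ReachesOn φ M S x → x.2 < f x.1 := by
    rintro x hx ⟨p, hpS, hp⟩
    exact snd_lt_of_lt_mem_snake hS hl hincomp (hMX hx) (hXstrip (hMX hx))
      ⟨hp.stepOn_mem hφmaps, hpS⟩ (hp.stepOn_rel (r := lt₂) hφinc)
  refine ⟨stopBefore φ M S, mapsTo_stopBefore hMX hφmaps fun x hx hr hxS => ?_,
    injOn_stopBefore hφinj S, fun x hx => ?_⟩
  · rw [hS] at hxS
    exact (hbelow x hx hr).not_ge hxS.2.2.1
  · by_cases hr : ReachesOn φ M S x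
    · exact .inr ⟨stopBefore_of_reachesOn hr, hbelow x hx hr⟩
    · exact .inl (stopBefore_of_not_reachesOn hr ▸ hφinc x hx)

/-- Lemma about snake-shaped sets: let `S = ⋃_{s=a}^{b} {s} × [f s .. l s]` be a
nonempty snake-shaped subset of `ℤ²`, `M ⊆ X ⊆ [a..b] × ℤ`, and let
`φ : M → X` be a strictly increasing injection. If `X ∩ S` contains no two
points comparable under the componentwise strict order, then there is an
injection `φ_S : M → X \ S` such that for every `x ∈ M`, either `x <̇ φ_S x`,
or `φ_S x = x` and `x` lies below `S`. -/
theorem stmt_7 (a b : ℤ) (hab : a ≤ b) (f l : ℤ → ℤ)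
    (S : Set (ℤ × ℤ))
    (hS : S = {p : ℤ × ℤ | a ≤ p.1 ∧ p.1 ≤ b ∧ f p.1 ≤ p.2 ∧ p.2 ≤ l p.1})
    (hSne : S.Nonempty)
    (hshape1 : ∀ s : ℤ, a ≤ s → s ≤ b - 1 →
      f (s + 1) ≤ f s ∧ f s ≤ l (s + 1) ∧ l (s + 1) ≤ l s)
    (hshape2 : ∀ s : ℤ, a ≤ s → s ≤ b - 2 → l (s + 2) ≤ f s)
    (M X : Set (ℤ × ℤ)) (hMX : M ⊆ X)
    (hXstrip : X ⊆ {p : ℤ × ℤ | a ≤ p.1 ∧ p.1 ≤ b})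
    (φ : ℤ × ℤ → ℤ × ℤ)
    (hφmaps : Set.MapsTo φ M X) (hφinj : Set.InjOn φ M)
    (hφinc : ∀ x ∈ M, x.1 < (φ x).1 ∧ x.2 < (φ x).2)
    (hincomp : ∀ x ∈ X ∩ S, ∀ y ∈ X ∩ S, ¬(x.1 < y.1 ∧ x.2 < y.2)) :
    ∃ φS : ℤ × ℤ → ℤ × ℤ,
      Set.MapsTo φS M (X \ S) ∧ Set.InjOn φS M ∧
      ∀ x ∈ M, (x.1 < (φS x).1 ∧ x.2 < (φS x).2) ∨ (φS x = x ∧ x.2 < f x.1) :=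
  stmt_7_general a b f l S hS hshape1 M X hMX hXstrip φ hφmaps hφinj hφinc hincomp
end

section
/- Let d ≥ 1 and i < n be integers. Let Γ be a subset of (i..n] × [0..d] whose points are pairwise incomparable with respect to the componentwise strict order <̇ on ℤ². Then there exists a multiset I of total size at most d with entries in the integer interval [i..n) such that Γ is contained in the set of boundary points of Σ^{(d)}_{i,n}(I) := {(t,h) ∈ ℤ² : i < t ≤ n and 0 ≤ h ≤ d − |I|^{(−∞..t−1]}}, where |I|^{(−∞..t−1]} counts the elements of I (with multiplicity) that are ≤ t−1. -/
/-!
Let `c t` be the largest depth `d - h` of a point `(s, h) ∈ Γ` with `s ≤ t`. It is monotone, vanishes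
at `i` and is at most `d`, so on `t ≤ n - 1` it is the cumulative count `t ↦ |I|^{(−∞..t]}` of a multiset `I` with
entries in `(i..n)` and size `c (n - 1) ≤ d`. Incomparability says that no point strictly left of
`(t, h) ∈ Γ` is strictly lower, so `c (t - 1) ≤ d - h` and `(t, h)` lies in `Σ(I)`; and any `(t', h') ∈ Σ(I)`
with `t < t'` has `h' ≤ d - c (t' - 1) ≤ d - c t ≤ h`, so `(t, h)` is a boundary point.
-/

theorem exists_multiset_card_filter_le_eq {c : ℤ → ℕ} (hc : Monotone c) {a : ℤ} (ha : c a = 0)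
    (b : ℤ) :
    ∃ I : Multiset ℤ, (∀ x ∈ I, a < x ∧ x ≤ b) ∧
      ∀ s, Multiset.card (I.filter (· ≤ s)) = c (min s b) := by
  have vanish : ∀ b ≤ a, ∀ s, c (min s b) = 0 := fun b hb s =>
    Nat.eq_zero_of_le_zero (ha ▸ hc ((min_le_right s b).trans hb))
  rcases lt_or_ge b a with hba | hab
  · exact ⟨0, by simp, fun s => by simp [vanish b hba.le]⟩
  induction b, hab using Int.leInduction with
  | base => exact ⟨0, by simp, fun s => by simp [vanish a le_rfl]⟩
  | succ b hab ih =>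
    obtain ⟨I, hI, hcount⟩ := ih
    refine ⟨I + Multiset.replicate (c (b + 1) - c b) (b + 1), ?_, fun s => ?_⟩
    · intro x hx
      rcases Multiset.mem_add.mp hx with hx | hx
      · have := hI x hx; omega
      · rw [Multiset.eq_of_mem_replicate hx]; omega
    rw [Multiset.filter_add, Multiset.card_add, hcount]
    rcases le_or_gt s b with hsb | hbs
    · rw [Multiset.filter_eq_nil.mpr fun x hx => by rw [Multiset.eq_of_mem_replicate hx]; omega,
        min_eq_left hsb, min_eq_left (by omega)]
      rfl
    · rw [Multiset.filter_eq_self.mpr fun x hx => by rw [Multiset.eq_of_mem_replicate hx]; omega,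
        Multiset.card_replicate, min_eq_right hbs.le, min_eq_right (by omega)]
      have := hc (Int.le_add_one le_rfl : b ≤ b + 1)
      omega

def depthProfile (G : Finset (ℤ × ℤ)) (d : ℕ) (t : ℤ) : ℕ :=
  (G.filter (·.1 ≤ t)).sup fun p => ((d : ℤ) - p.2).toNat

section depthProfile

variable (G : Finset (ℤ × ℤ)) (d : ℕ)

theorem depthProfile_monotone : Monotone (depthProfile G d) := fun _ _ hst =>
  Finset.sup_mono (Finset.monotone_filter_right G fun _ _ h => h.trans hst)

theorem depthProfile_eq_zero {a : ℤ} (h : ∀ p ∈ G, a < p.1) : depthProfile G d a = 0 := by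
  rw [depthProfile, Finset.filter_false_of_mem fun p hp => not_le.mpr (h p hp), Finset.sup_empty]
  rfl

theorem depthProfile_le (h : ∀ p ∈ G, 0 ≤ p.2) (t : ℤ) : depthProfile G d t ≤ d :=
  Finset.sup_le fun p hp => by have := h p (Finset.mem_filter.mp hp).1; omega

variable {G d}

theorem depth_le_depthProfile {p : ℤ × ℤ} (hp : p ∈ G) : ((d : ℤ) - p.2).toNat ≤ depthProfile G d p.1 :=
  Finset.le_sup (f := fun p : ℤ × ℤ => ((d : ℤ) - p.2).toNat) (Finset.mem_filter.mpr ⟨hp, le_rfl⟩)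

theorem depthProfile_le_depth_of_lt (hG : ∀ x ∈ G, ∀ y ∈ G, ¬(x.1 < y.1 ∧ x.2 < y.2)) {q : ℤ × ℤ} (hq : q ∈ G)
    {t : ℤ} (ht : t < q.1) : depthProfile G d t ≤ ((d : ℤ) - q.2).toNat :=
  Finset.sup_le fun p hp => by
    obtain ⟨hpG, hpt⟩ := Finset.mem_filter.mp hp
    have := hG p hpG q hq
    omega

end depthProfile

theorem stmt_10_general (d : ℕ) (i n : ℤ)
    (Γ : Set (ℤ × ℤ))
    (hΓ : Γ ⊆ {p : ℤ × ℤ | i < p.1 ∧ p.1 ≤ n ∧ 0 ≤ p.2 ∧ p.2 ≤ (d : ℤ)})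
    (hincomp : ∀ x ∈ Γ, ∀ y ∈ Γ, ¬(x.1 < y.1 ∧ x.2 < y.2)) :
    ∃ I : Multiset ℤ, Multiset.card I ≤ d ∧ (∀ x ∈ I, i ≤ x ∧ x < n) ∧
      Γ ⊆ {p : ℤ × ℤ |
        (i < p.1 ∧ p.1 ≤ n ∧ 0 ≤ p.2 ∧
          p.2 ≤ (d : ℤ) - (Multiset.card (I.filter (fun x => x ≤ p.1 - 1)) : ℤ)) ∧
        ¬∃ q : ℤ × ℤ,
          (i < q.1 ∧ q.1 ≤ n ∧ 0 ≤ q.2 ∧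
            q.2 ≤ (d : ℤ) - (Multiset.card (I.filter (fun x => x ≤ q.1 - 1)) : ℤ)) ∧
          p.1 < q.1 ∧ p.2 < q.2} := by
  obtain ⟨G, rfl⟩ := (((Set.finite_Ioc i n).prod (Set.finite_Icc 0 (d : ℤ))).subset
    fun p hp => by obtain ⟨h1, h2, h3, h4⟩ := hΓ hp; exact ⟨⟨h1, h2⟩, h3, h4⟩).exists_finset_coe
  obtain ⟨I, hI, hcount⟩ := exists_multiset_card_filter_le_eq (depthProfile_monotone G d)
    (depthProfile_eq_zero G d fun p hp => (hΓ hp).1) (n - 1)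
  refine ⟨I, ?_, fun x hx => by have := hI x hx; omega, fun p hp => ?_⟩
  · have hall := hcount (n - 1)
    rw [Multiset.filter_eq_self.mpr fun x hx => (hI x hx).2, min_self] at hall
    exact hall ▸ depthProfile_le G d (fun p hp => (hΓ hp).2.2.1) _
  obtain ⟨hp1, hp2, hp3, hp4⟩ := hΓ hp
  have below := depthProfile_le_depth_of_lt (d := d) hincomp hp (sub_one_lt p.1)
  refine ⟨⟨hp1, hp2, hp3, by rw [hcount, min_eq_left (by omega)]; omega⟩, ?_⟩
  rintro ⟨q, ⟨-, hqn, -, hq⟩, hpq1, hpq2⟩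
  rw [hcount, min_eq_left (by omega)] at hq
  have := depth_le_depthProfile (d := d) hp
  have := depthProfile_monotone G d (by omega : p.1 ≤ q.1 - 1)
  omega

/-- Lemma: any subset `Γ` of `(i..n] × [0..d]` with pairwise incomparable
points (componentwise strict order) is contained in the boundary of
`Σ^{(d)}_{i,n}(I)` for some multiset `I` of size at most `d` with entries in
`[i..n)`. -/
theorem stmt_10 (d : ℕ) (hd : 1 ≤ d) (i n : ℤ) (hin : i < n)
    (Γ : Set (ℤ × ℤ))
    (hΓ : Γ ⊆ {p : ℤ × ℤ | i < p.1 ∧ p.1 ≤ n ∧ 0 ≤ p.2 ∧ p.2 ≤ (d : ℤ)})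
    (hincomp : ∀ x ∈ Γ, ∀ y ∈ Γ, ¬(x.1 < y.1 ∧ x.2 < y.2)) :
    ∃ I : Multiset ℤ, Multiset.card I ≤ d ∧ (∀ x ∈ I, i ≤ x ∧ x < n) ∧
      Γ ⊆ {p : ℤ × ℤ |
        (i < p.1 ∧ p.1 ≤ n ∧ 0 ≤ p.2 ∧
          p.2 ≤ (d : ℤ) - (Multiset.card (I.filter (fun x => x ≤ p.1 - 1)) : ℤ)) ∧
        ¬∃ q : ℤ × ℤ,
          (i < q.1 ∧ q.1 ≤ n ∧ 0 ≤ q.2 ∧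
            q.2 ≤ (d : ℤ) - (Multiset.card (I.filter (fun x => x ≤ q.1 - 1)) : ℤ)) ∧
          p.1 < q.1 ∧ p.2 < q.2} :=
  stmt_10_general d i n Γ hΓ hincomp
end

section
/- Fix integers d ≥ 1, k < j, and a multiset I of size at most d with integer entries. Define Σ^{(d)}_{k,j}(I) = {(t,h) : k < t ≤ j, 0 ≤ h ≤ d − |I|^{(−∞..t−1]}} and Ω^{(d)}_{k,j}(I) = {(t,h) : k < t < j, 0 ≤ h < d − |I|^{(−∞..t]}}. Then Ω^{(d)}_{k,j}(I) is exactly the set of interior points of Σ^{(d)}_{k,j}(I), i.e. the points a ∈ Σ^{(d)}_{k,j}(I) such that there exists b ∈ Σ^{(d)}_{k,j}(I) with a <̇ b. -/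
lemma card_filter_mono (I : Multiset ℤ) {a b : ℤ} (h : a ≤ b) :
    (Multiset.card (I.filter (fun x => x ≤ a)) : ℤ) ≤
    (Multiset.card (I.filter (fun x => x ≤ b)) : ℤ) := by
  exact_mod_cast Multiset.card_le_card
    (Multiset.monotone_filter_right I (fun x hx => le_trans hx h))

/-- `Ω^{(d)}_{k,j}(I)` is exactly the set of interior points of
`Σ^{(d)}_{k,j}(I)`. -/
theorem stmt_11 (d : ℕ) (hd : 1 ≤ d) (k j : ℤ) (hkj : k < j)
    (I : Multiset ℤ) (hI : Multiset.card I ≤ d) :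
    {p : ℤ × ℤ | k < p.1 ∧ p.1 < j ∧ 0 ≤ p.2 ∧
        p.2 < (d : ℤ) - (Multiset.card (I.filter (fun x => x ≤ p.1)) : ℤ)}
    = {p : ℤ × ℤ |
        (k < p.1 ∧ p.1 ≤ j ∧ 0 ≤ p.2 ∧
          p.2 ≤ (d : ℤ) - (Multiset.card (I.filter (fun x => x ≤ p.1 - 1)) : ℤ)) ∧
        ∃ q : ℤ × ℤ,
          (k < q.1 ∧ q.1 ≤ j ∧ 0 ≤ q.2 ∧
            q.2 ≤ (d : ℤ) - (Multiset.card (I.filter (fun x => x ≤ q.1 - 1)) : ℤ)) ∧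
          p.1 < q.1 ∧ p.2 < q.2} := by
  ext p
  simp only [Set.mem_setOf_eq]
  constructor
  · rintro ⟨h1, h2, h3, h4⟩
    have hm := card_filter_mono I (show p.1 - 1 ≤ p.1 by omega)
    refine ⟨⟨h1, le_of_lt h2, h3, by omega⟩,
      ⟨(p.1 + 1, p.2 + 1), ⟨by omega, by omega, by omega, ?_⟩, by omega, by omega⟩⟩
    have : p.1 + 1 - 1 = p.1 := by ring
    rw [this]; omega
  · rintro ⟨⟨h1, h2, h3, h4⟩, q, ⟨hq1, hq2, hq3, hq4⟩, hlt1, hlt2⟩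
    have hm := card_filter_mono I (show p.1 ≤ q.1 - 1 by omega)
    exact ⟨h1, by omega, h3, by omega⟩
end

section
/- Let d < p with p prime, let i < n, and let λ ∈ ℤⁿ. Define 𝔜 = {(t,h) ∈ (i..n] × [1..d] : t − i + λ_i − λ_t − h ≡ 0 mod p} and 𝔠 = {s ∈ (i..n) : s − i + λ_i − λ_s ≡ 0 mod p}. Then 𝔜 contains at most one point in each column {t} × ℤ; consequently, for any subset Δ ⊆ 𝔜 with pairwise <̇-incomparable points, there exists a strictly decreasing injection Δ → 𝔠 × {0} if and only if there exists a weakly decreasing injection from the multiset-free set π₁(Δ) − 1 = {t − 1 : (t,h) ∈ Δ} to 𝔠 (an injection σ with σ(s) ≤ s for all s). -/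
/-!
Two points `(t, h)`, `(t, h')` of `𝔜` in one column satisfy `p ∣ h - h'`, and `|h - h'| < d < p`,
so `h = h'`. Hence `π₁` is injective on `Δ ⊆ 𝔜`, and since heights in `𝔜` are positive, a strictly
decreasing injection `φ : Δ → 𝔠 × {0}` carries the same information as the weakly decreasing
injection `t - 1 ↦ π₁ (φ (t, h))` on `π₁(Δ) - 1`.
-/

lemma eq_of_dvd_sub_of_mem_Icc {p d : ℕ} (hd : d < p) {a h h' : ℤ}
    (hh : h ∈ Set.Icc 1 (d : ℤ)) (hh' : h' ∈ Set.Icc 1 (d : ℤ))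
    (ha : (p : ℤ) ∣ a - h) (ha' : (p : ℤ) ∣ a - h') : h = h' := by
  have hdvd : (p : ℤ) ∣ h - h' := by simpa using dvd_sub ha' ha
  have hlt : |h - h'| < p := by
    obtain ⟨h1, h2⟩ := hh
    obtain ⟨h1', h2'⟩ := hh'
    rw [abs_lt]
    omega
  exact sub_eq_zero.mp (Int.eq_zero_of_abs_lt_dvd hdvd hlt)

section DecreasingInjections

variable {Δ : Set (ℤ × ℤ)} {C : Set ℤ}

lemma exists_le_injOn_sub_one_of_lt_injOn {φ : ℤ × ℤ → ℤ × ℤ}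
    (hmaps : Set.MapsTo φ Δ {q : ℤ × ℤ | q.1 ∈ C ∧ q.2 = 0}) (hinj : Set.InjOn φ Δ)
    (hlt : ∀ x ∈ Δ, (φ x).1 < x.1) :
    ∃ σ : ℤ → ℤ,
      Set.MapsTo σ {s : ℤ | ∃ x ∈ Δ, s = x.1 - 1} C ∧
      Set.InjOn σ {s : ℤ | ∃ x ∈ Δ, s = x.1 - 1} ∧
      ∀ s ∈ {s : ℤ | ∃ x ∈ Δ, s = x.1 - 1}, σ s ≤ s := by
  classical
  set g := Function.invFunOn (fun x : ℤ × ℤ => x.1 - 1) Δ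
  have hg : ∀ s ∈ {s : ℤ | ∃ x ∈ Δ, s = x.1 - 1}, g s ∈ Δ ∧ (g s).1 - 1 = s := by
    rintro s ⟨x, hx, rfl⟩
    exact ⟨Function.invFunOn_mem ⟨x, hx, rfl⟩,
      Function.invFunOn_eq (f := fun x : ℤ × ℤ => x.1 - 1) ⟨x, hx, rfl⟩⟩
  refine ⟨fun s => (φ (g s)).1, fun s hs => (hmaps (hg s hs).1).1, fun s hs s' hs' hss' => ?_,
    fun s hs => ?_⟩
  · have hgg : g s = g s' := hinj (hg s hs).1 (hg s' hs').1 <|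
      Prod.ext hss' (by rw [(hmaps (hg s hs).1).2, (hmaps (hg s' hs').1).2])
    rw [← (hg s hs).2, ← (hg s' hs').2, hgg]
  · have := hlt _ (hg s hs).1
    have := (hg s hs).2
    dsimp only
    omega

lemma exists_lt_injOn_of_le_injOn_sub_one (hfst : Set.InjOn Prod.fst Δ)
    (hpos : ∀ x ∈ Δ, 0 < x.2) {σ : ℤ → ℤ}
    (hmaps : Set.MapsTo σ {s : ℤ | ∃ x ∈ Δ, s = x.1 - 1} C)
    (hinj : Set.InjOn σ {s : ℤ | ∃ x ∈ Δ, s = x.1 - 1})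
    (hle : ∀ s ∈ {s : ℤ | ∃ x ∈ Δ, s = x.1 - 1}, σ s ≤ s) :
    ∃ φ : ℤ × ℤ → ℤ × ℤ,
      Set.MapsTo φ Δ {q : ℤ × ℤ | q.1 ∈ C ∧ q.2 = 0} ∧ Set.InjOn φ Δ ∧
      ∀ x ∈ Δ, (φ x).1 < x.1 ∧ (φ x).2 < x.2 := by
  refine ⟨fun x => (σ (x.1 - 1), 0), fun x hx => ⟨hmaps ⟨x, hx, rfl⟩, rfl⟩,
    fun x hx y hy hxy => hfst hx hy ?_, fun x hx => ⟨?_, hpos x hx⟩⟩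
  · have := hinj ⟨x, hx, rfl⟩ ⟨y, hy, rfl⟩ (congrArg Prod.fst hxy)
    omega
  · have := hle _ ⟨x, hx, rfl⟩
    dsimp only
    omega

end DecreasingInjections

theorem stmt_18_general (p : ℕ) (d : ℕ) (hd : d < p)
    (i n : ℤ) (lam : ℤ → ℤ)
    (Y : Set (ℤ × ℤ))
    (hY : Y = {x : ℤ × ℤ | i < x.1 ∧ x.1 ≤ n ∧ 1 ≤ x.2 ∧ x.2 ≤ (d : ℤ) ∧
      (p : ℤ) ∣ (x.1 - i + lam i - lam x.1 - x.2)})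
    (C : Set ℤ) :
    (∀ t h h' : ℤ, (t, h) ∈ Y → (t, h') ∈ Y → h = h') ∧
    (∀ Δ ⊆ Y, (∀ x ∈ Δ, ∀ y ∈ Δ, ¬(x.1 < y.1 ∧ x.2 < y.2)) →
      ((∃ φ : ℤ × ℤ → ℤ × ℤ,
          Set.MapsTo φ Δ {q : ℤ × ℤ | q.1 ∈ C ∧ q.2 = 0} ∧ Set.InjOn φ Δ ∧
          ∀ x ∈ Δ, (φ x).1 < x.1 ∧ (φ x).2 < x.2) ↔
        (∃ σ : ℤ → ℤ,
          Set.MapsTo σ {s : ℤ | ∃ x ∈ Δ, s = x.1 - 1} C ∧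
          Set.InjOn σ {s : ℤ | ∃ x ∈ Δ, s = x.1 - 1} ∧
          ∀ s ∈ {s : ℤ | ∃ x ∈ Δ, s = x.1 - 1}, σ s ≤ s))) := by
  have column : ∀ t h h' : ℤ, (t, h) ∈ Y → (t, h') ∈ Y → h = h' := by
    rw [hY]
    rintro t h h' ⟨-, -, h1, h2, hdvd⟩ ⟨-, -, h1', h2', hdvd'⟩
    exact eq_of_dvd_sub_of_mem_Icc hd ⟨h1, h2⟩ ⟨h1', h2'⟩ hdvd hdvd'
  have height_pos : ∀ x ∈ Y, 0 < x.2 := by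
    rw [hY]
    exact fun x hx => hx.2.2.1
  refine ⟨column, fun Δ hΔ _ => ⟨fun ⟨φ, hmaps, hinj, hdec⟩ => ?_, fun ⟨σ, hmaps, hinj, hle⟩ => ?_⟩⟩
  · exact exists_le_injOn_sub_one_of_lt_injOn hmaps hinj fun x hx => (hdec x hx).1
  · have hfst : Set.InjOn Prod.fst Δ := fun x hx y hy hxy =>
      Prod.ext hxy (column _ _ _ (hΔ hx) (hxy ▸ hΔ hy))
    exact exists_lt_injOn_of_le_injOn_sub_one hfst (fun x hx => height_pos x (hΔ hx)) hmaps hinj hle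

/-- For `d < p`, the set `𝔜 = 𝔜_d^λ(i,n)` has at most one point in each
column; consequently, for any subset `Δ ⊆ 𝔜` with pairwise incomparable
points, a strictly decreasing injection `Δ → 𝔠 × {0}` exists iff a weakly
decreasing injection `{t − 1 : (t,h) ∈ Δ} → 𝔠` exists. -/
theorem stmt_18 (p : ℕ) (hp : p.Prime) (d : ℕ) (hd : d < p)
    (i n : ℤ) (hin : i < n) (lam : ℤ → ℤ)
    (Y : Set (ℤ × ℤ))
    (hY : Y = {x : ℤ × ℤ | i < x.1 ∧ x.1 ≤ n ∧ 1 ≤ x.2 ∧ x.2 ≤ (d : ℤ) ∧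
      (p : ℤ) ∣ (x.1 - i + lam i - lam x.1 - x.2)})
    (C : Set ℤ)
    (hC : C = {s : ℤ | i < s ∧ s < n ∧ (p : ℤ) ∣ (s - i + lam i - lam s)}) :
    (∀ t h h' : ℤ, (t, h) ∈ Y → (t, h') ∈ Y → h = h') ∧
    (∀ Δ ⊆ Y, (∀ x ∈ Δ, ∀ y ∈ Δ, ¬(x.1 < y.1 ∧ x.2 < y.2)) →
      ((∃ φ : ℤ × ℤ → ℤ × ℤ,
          Set.MapsTo φ Δ {q : ℤ × ℤ | q.1 ∈ C ∧ q.2 = 0} ∧ Set.InjOn φ Δ ∧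
          ∀ x ∈ Δ, (φ x).1 < x.1 ∧ (φ x).2 < x.2) ↔
        (∃ σ : ℤ → ℤ,
          Set.MapsTo σ {s : ℤ | ∃ x ∈ Δ, s = x.1 - 1} C ∧
          Set.InjOn σ {s : ℤ | ∃ x ∈ Δ, s = x.1 - 1} ∧
          ∀ s ∈ {s : ℤ | ∃ x ∈ Δ, s = x.1 - 1}, σ s ≤ s))) :=
  stmt_18_general p d hd i n lam Y hY C
end
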